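/- (Looseness of InfoNCE when mutual information exceeds log K, final remark of the proof of Proposition 1). For every K ≥ 1 and every critic h : S × T → ℝ, if I(p) > log K then I_NCE(K) < I(p); i.e., the encoder-based InfoNCE bound is strictly loose whenever the mutual information exceeds log K. -/

import Mathlib

open Finset

variable {S T : Type*}

/-- Marginal of the joint pmf `p` on the first coordinate: `pS(z) = Σ_y p(z,y)`. -/
noncomputable def margS [Fintype T] (p : S × T → ℝ) (z : S) : ℝ := ∑ y, p (z, y)

/-- Marginal of the joint pmf `p` on the second coordinate: `pT(y) = Σ_z p(z,y)`. -/
noncomputable def margT [Fintype S] (p : S × T → ℝ) (y : T) : ℝ := ∑ z, p (z, y)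

/-- Mutual information `I(p) = Σ_{(z,y)} p(z,y)·log(p(z,y)/(pS(z)·pT(y)))`. -/
noncomputable def mutInfo [Fintype S] [Fintype T] (p : S × T → ℝ) : ℝ :=
  ∑ z, ∑ y, p (z, y) * Real.log (p (z, y) / (margS p z * margT p y))

/-- Entropy of the marginal `pT`: `H(pT) = −Σ_y pT(y)·log pT(y)`. -/
noncomputable def entropyT [Fintype S] [Fintype T] (p : S × T → ℝ) : ℝ :=
  -∑ y, margT p y * Real.log (margT p y)

/-- Kullback–Leibler divergence on a finite type: `KL(u‖v) = Σ_x u(x)·log(u(x)/v(x))`. -/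
noncomputable def klFin {α : Type*} [Fintype α] (u v : α → ℝ) : ℝ :=
  ∑ x, u x * Real.log (u x / v x)

/-- Conditional pmf on `T` given `z`: `p(·|z)(y) = p(z,y)/pS(z)`. -/
noncomputable def condT [Fintype T] (p : S × T → ℝ) (z : S) (y : T) : ℝ :=
  p (z, y) / margS p z

/-- Partition function of a critic `h`: `Z̃(z) = Σ_y pT(y)·exp(h(z,y))`. -/
noncomputable def partFun [Fintype S] [Fintype T] (p : S × T → ℝ) (h : S × T → ℝ) (z : S) : ℝ :=
  ∑ y, margT p y * Real.exp (h (z, y))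

/-- Decoder-based (unnormalized Barber–Agakov) lower bound
`I_DLB = Σ_{(z,y)} p(z,y)·h(z,y) − Σ_z pS(z)·log Z̃(z)`. -/
noncomputable def IDLB [Fintype S] [Fintype T] (p h : S × T → ℝ) : ℝ :=
  (∑ z, ∑ y, p (z, y) * h (z, y)) - ∑ z, margS p z * Real.log (partFun p h z)

/-- Monte Carlo estimator of the partition function from a positive sample `y`
and `K − 1 = n` negatives `ys`: `m(z; y, ys) = (1/K)·(e^{h(z,y)} + Σ_i e^{h(z,ys_i)})`,
with `K = n + 1`. -/
noncomputable def mEst (h : S × T → ℝ) (n : ℕ) (z : S) (y : T) (ys : Fin n → T) : ℝ :=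
  (Real.exp (h (z, y)) + ∑ i, Real.exp (h (z, ys i))) / (n + 1)

/-- InfoNCE bound with `K = n + 1` samples:
`I_NCE(K) = Σ_{(z,y)} Σ_{ys} p(z,y)·ΠpT(ys)·log( e^{h(z,y)} / m(z; y, ys) )`. -/
noncomputable def INCE [Fintype S] [Fintype T] (p h : S × T → ℝ) (n : ℕ) : ℝ :=
  ∑ z, ∑ y, ∑ ys : Fin n → T,
    p (z, y) * (∏ i, margT p (ys i)) *
      Real.log (Real.exp (h (z, y)) / mEst h n z y ys)

/- Each log-ratio `log (e^{h(z,y)} / m)` is at most `log K`, since the positive sample alone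
already contributes `e^{h(z,y)} / K` to `m`; `I_NCE(K)` averages these terms against the
probability weights `p(z,y)·ΠpT(ys)`, so `I_NCE(K) ≤ log K < I(p)`. -/

lemma sum_margT_eq_one [Fintype S] [Fintype T] {p : S × T → ℝ} (hp_sum : ∑ x, p x = 1) :
    ∑ y, margT p y = 1 := by
  rw [← hp_sum, Fintype.sum_prod_type, Finset.sum_comm]
  rfl

lemma margT_nonneg [Fintype S] {p : S × T → ℝ} (hp : ∀ x, 0 ≤ p x) (y : T) :
    0 ≤ margT p y :=
  Finset.sum_nonneg fun z _ => hp (z, y)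

lemma sum_prod_margT_eq_one [Fintype S] [Fintype T] {p : S × T → ℝ} (hp_sum : ∑ x, p x = 1)
    (n : ℕ) : ∑ ys : Fin n → T, ∏ i, margT p (ys i) = 1 := by
  rw [← Fintype.sum_pow, sum_margT_eq_one hp_sum, one_pow]

lemma mEst_pos (h : S × T → ℝ) (n : ℕ) (z : S) (y : T) (ys : Fin n → T) :
    0 < mEst h n z y ys := by
  unfold mEst
  positivity

lemma exp_div_mEst_le (h : S × T → ℝ) (n : ℕ) (z : S) (y : T) (ys : Fin n → T) :
    Real.exp (h (z, y)) / mEst h n z y ys ≤ n + 1 := by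
  rw [div_le_iff₀ (mEst_pos h n z y ys), mEst, mul_div_cancel₀ _ (by positivity)]
  have : 0 ≤ ∑ i, Real.exp (h (z, ys i)) := by positivity
  linarith

lemma INCE_le_log [Fintype S] [Fintype T] {p : S × T → ℝ} (hp : ∀ x, 0 ≤ p x)
    (hp_sum : ∑ x, p x = 1) (h : S × T → ℝ) (n : ℕ) :
    INCE p h n ≤ Real.log (n + 1) :=
  calc INCE p h n
      ≤ ∑ z, ∑ y, ∑ ys : Fin n → T, p (z, y) * (∏ i, margT p (ys i)) * Real.log (n + 1) := by
        unfold INCE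
        gcongr with z _ y _ ys _
        · exact mul_nonneg (hp _) (Finset.prod_nonneg fun i _ => margT_nonneg hp _)
        · exact div_pos (Real.exp_pos _) (mEst_pos h n z y ys)
        · exact exp_div_mEst_le h n z y ys
    _ = Real.log (n + 1) := by
        simp_rw [← Finset.sum_mul, ← Finset.mul_sum, sum_prod_margT_eq_one hp_sum, mul_one,
          ← Fintype.sum_prod_type', hp_sum, one_mul]

theorem infonce_strictly_loose_general [Fintype S] [Fintype T]
    (p : S × T → ℝ) (hp_pos : ∀ x, 0 < p x) (hp_sum : ∑ x, p x = 1)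
    (h : S × T → ℝ) (n : ℕ)
    (hI : mutInfo p > Real.log (n + 1)) :
    INCE p h n < mutInfo p :=
  (INCE_le_log (fun x => (hp_pos x).le) hp_sum h n).trans_lt hI

/-- STATEMENT 15 (Looseness of InfoNCE when the mutual information exceeds `log K`),
with `K = n + 1 ≥ 1`. -/
theorem infonce_strictly_loose [Fintype S] [Fintype T] [Nonempty S] [Nonempty T]
    (p : S × T → ℝ) (hp_pos : ∀ x, 0 < p x) (hp_sum : ∑ x, p x = 1)
    (h : S × T → ℝ) (n : ℕ)
    (hI : mutInfo p > Real.log (n + 1)) :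
    INCE p h n < mutInfo p :=
  infonce_strictly_loose_general p hp_pos hp_sum h n hI
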